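/- arXiv:2107.05791 — 5 statements merged into one kernel-verified Lean document; each statement's English description precedes it below -/
import Mathlib

section
/- In the N-node line graph setting of the source-switch experiment, the basic collection algorithm reaches the correct value at time 2N-1: a_0(2N-1) = N. -/
/-- Adjacency in the `N`-node line graph on nodes `0, …, N-1`. -/
def LineAdj (N i j : ℕ) : Prop := (i + 1 = j ∨ j + 1 = i) ∧ i < N ∧ j < N

/-- The source at time `t`: node `N-1` for `t = 0`, node `0` for `t ≥ 1`. -/
def lineSrc (N t : ℕ) : ℕ := if t = 0 then N - 1 else 0

/-!
Once the source sits at node `0`, every other node takes one more than a neighbour's previous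
estimate, so `min i t ≤ d̂_i(t)`; together with the upper bound through node `i - 1` this pins
`d̂_i(t) = i` for `i < t`. From then on the constraining node of every `i ≥ 1` is `i - 1`
(node `N - 1` has no other neighbour), so from time `N - 1` the collection tree is the path
rooted at `0`. Accumulates then travel along the path towards `0`, one hop per step:
`a_{N-1-k}(N + k) = k + 1`, and `k = N - 1` gives `a_0(2N - 1) = N`.
-/

theorem lineSrc_of_ne_zero {N t : ℕ} (ht : t ≠ 0) : lineSrc N t = 0 := if_neg ht

namespace LineSwitch

def DistanceUpdate (N : ℕ) (dh c : ℕ → ℕ → ℕ) : Prop :=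
  ∀ t, ∀ i < N, i ≠ lineSrc N t →
    LineAdj N i (c t i) ∧ dh t i = 1 + dh (t - 1) (c t i) ∧
    (∀ k, LineAdj N i k → dh t i ≤ 1 + dh (t - 1) k)

def AccumulateUpdate (N : ℕ) (c a : ℕ → ℕ → ℕ) : Prop :=
  ∀ t, 1 ≤ t → ∀ i < N, a t i =
    1 + ∑ j ∈ (Finset.range N).filter
      (fun j => j ≠ lineSrc N (t - 1) ∧ c (t - 1) j = i), a (t - 1) j

variable {N : ℕ} {dh c a : ℕ → ℕ → ℕ}

theorem min_le_dist (hc : DistanceUpdate N dh c) : ∀ t, ∀ i < N, min i t ≤ dh t i := by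
  intro t
  induction t with
  | zero => simp
  | succ t ih =>
    intro i hi
    rcases Nat.eq_zero_or_pos i with rfl | hi0
    · simp
    obtain ⟨⟨hadj, -, hcN⟩, hdh, -⟩ :=
      hc (t + 1) i hi (by rw [lineSrc_of_ne_zero t.succ_ne_zero]; omega)
    have hprev := ih (c (t + 1) i) hcN
    rw [Nat.add_sub_cancel] at hdh
    omega

theorem dist_eq_of_lt (hsrc : ∀ t, dh t (lineSrc N t) = 0) (hc : DistanceUpdate N dh c) :
    ∀ t, ∀ i < N, i < t → dh t i = i := by
  intro t
  induction t with
  | zero => intro i _ h; omega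
  | succ t ih =>
    intro i hi hit
    rcases Nat.eq_zero_or_pos i with rfl | hi0
    · simpa [lineSrc_of_ne_zero t.succ_ne_zero] using hsrc (t + 1)
    obtain ⟨-, -, hmin⟩ :=
      hc (t + 1) i hi (by rw [lineSrc_of_ne_zero t.succ_ne_zero]; omega)
    have hupper := hmin (i - 1) ⟨Or.inr (by omega), hi, by omega⟩
    rw [Nat.add_sub_cancel, ih (i - 1) (by omega) (by omega)] at hupper
    have hlower := min_le_dist hc (t + 1) i hi
    omega

theorem constrainer_eq_pred (hsrc : ∀ t, dh t (lineSrc N t) = 0) (hc : DistanceUpdate N dh c)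
    {t i : ℕ} (ht : t ≠ 0) (hi0 : i ≠ 0) (hi : i < N) (hit : i < t ∨ i = N - 1) :
    c t i = i - 1 := by
  obtain ⟨⟨hadj, -, hcN⟩, hdh, -⟩ := hc t i hi (by rw [lineSrc_of_ne_zero ht]; exact hi0)
  rcases hadj with hsucc | hpred
  · -- `i = d̂_i(t) = 1 + d̂_{i+1}(t - 1) ≥ 1 + min (i + 1) (t - 1) = i + 1`
    have hlower := min_le_dist hc (t - 1) (c t i) hcN
    rw [dist_eq_of_lt hsrc hc t i hi (by omega)] at hdh
    omega
  · omega

theorem children_eq (hN : 2 ≤ N) (hsrc : ∀ t, dh t (lineSrc N t) = 0)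
    (hc : DistanceUpdate N dh c) {t : ℕ} (ht : N - 1 ≤ t) (i : ℕ) :
    (Finset.range N).filter (fun j => j ≠ lineSrc N t ∧ c t j = i) =
      if i + 1 < N then {i + 1} else ∅ := by
  have hpath : ∀ j < N, j ≠ 0 → c t j = j - 1 := fun j hj hj0 =>
    constrainer_eq_pred hsrc hc (by omega) hj0 hj (by omega)
  ext j
  simp only [Finset.mem_filter, Finset.mem_range, lineSrc_of_ne_zero (by omega : t ≠ 0)]
  split_ifs with hi
  · simp only [Finset.mem_singleton]
    constructor
    · rintro ⟨hj, hj0, rfl⟩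
      have := hpath j hj hj0
      omega
    · rintro rfl
      exact ⟨hi, by omega, by rw [hpath (i + 1) hi (by omega)]; rfl⟩
  · simp only [Finset.notMem_empty, iff_false]
    rintro ⟨hj, hj0, rfl⟩
    have := hpath j hj hj0
    omega

theorem accumulate_succ (hN : 2 ≤ N) (hsrc : ∀ t, dh t (lineSrc N t) = 0)
    (hc : DistanceUpdate N dh c) (ha : AccumulateUpdate N c a) {t i : ℕ} (ht : N - 1 ≤ t)
    (hi : i < N) :
    a (t + 1) i = 1 + if i + 1 < N then a t (i + 1) else 0 := by
  rw [ha (t + 1) (by omega) i hi, Nat.add_sub_cancel, children_eq hN hsrc hc ht]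
  split_ifs <;> simp

theorem accumulate_eq (hN : 2 ≤ N) (hsrc : ∀ t, dh t (lineSrc N t) = 0)
    (hc : DistanceUpdate N dh c) (ha : AccumulateUpdate N c a) :
    ∀ k < N, a (N + k) (N - 1 - k) = k + 1 := by
  intro k
  induction k with
  | zero =>
    intro _
    have h := accumulate_succ hN hsrc hc ha (t := N - 1) le_rfl (by omega : N - 1 < N)
    rw [Nat.sub_add_cancel (by omega), if_neg (by omega)] at h
    simpa using h
  | succ k ih =>
    intro hk
    have h := accumulate_succ hN hsrc hc ha (t := N + k) (by omega)
      (by omega : N - 1 - (k + 1) < N)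
    rw [if_pos (by omega), show N - 1 - (k + 1) + 1 = N - 1 - k by omega, ih (by omega)] at h
    rw [← add_assoc, h]
    ring

end LineSwitch

open LineSwitch in
theorem line_switch_correct_general (N : ℕ) (hN : 2 ≤ N) (dh a : ℕ → ℕ → ℕ) (c : ℕ → ℕ → ℕ)
    (hsrc : ∀ t, dh t (lineSrc N t) = 0)
    (hc : ∀ t, ∀ i < N, i ≠ lineSrc N t →
      LineAdj N i (c t i) ∧ dh t i = 1 + dh (t - 1) (c t i) ∧
      (∀ k, LineAdj N i k → dh t i ≤ 1 + dh (t - 1) k))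
    (ha : ∀ t, 1 ≤ t → ∀ i < N, a t i =
      1 + ∑ j ∈ (Finset.range N).filter
            (fun j => j ≠ lineSrc N (t - 1) ∧ c (t - 1) j = i), a (t - 1) j) :
    a (2 * N - 1) 0 = N := by
  have h := accumulate_eq hN hsrc hc ha (N - 1) (by omega)
  rwa [show N + (N - 1) = 2 * N - 1 by omega, Nat.sub_self, Nat.sub_add_cancel (by omega)] at h

/-- Source switch on the `N`-line from steady state: the basic collection
algorithm reaches the correct value at time `2N-1`: `a_0(2N-1) = N`. -/
theorem line_switch_correct (N : ℕ) (hN : 2 ≤ N) (dh a : ℕ → ℕ → ℕ) (c : ℕ → ℕ → ℕ)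
    (hinit : ∀ i < N, dh 0 i = N - 1 - i ∧ a 0 i = i + 1)
    (hsrc : ∀ t, dh t (lineSrc N t) = 0)
    (hcsrc : ∀ t, c t (lineSrc N t) = lineSrc N t)
    (hc : ∀ t, ∀ i < N, i ≠ lineSrc N t →
      LineAdj N i (c t i) ∧ dh t i = 1 + dh (t - 1) (c t i) ∧
      (∀ k, LineAdj N i k → dh t i ≤ 1 + dh (t - 1) k))
    (ha : ∀ t, 1 ≤ t → ∀ i < N, a t i =
      1 + ∑ j ∈ (Finset.range N).filter
            (fun j => j ≠ lineSrc N (t - 1) ∧ c (t - 1) j = i), a (t - 1) j) :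
    a (2 * N - 1) 0 = N :=
  line_switch_correct_general N hN dh a c hsrc hc ha
end

section
/- Let G be a connected graph with old source D-1 and new source 0 (which are at distance ≥ 3 apart), initialized at the steady state for source D-1. Under the ABF update with source 0 for t ≥ 1, every node i with d(0,i) = m < t satisfies d̂_i(t) = m. -/
/-!
At time `t` every estimate `d̂_i(t)` is at least `min (d(z,i)) t`: this is trivial at `t = 0`,
and it survives a relaxation step because the distances of neighbours to `z` differ by at most
one. Conversely, a node `i ≠ z` at distance `m ≤ t` has a neighbour on a
geodesic to `z` at distance `m - 1 < t`, which by induction already holds its true distance at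
time `t`; so the relaxation at time `t + 1` gives at most `m`, and the lower bound gives equality.
-/

namespace SimpleGraph

variable {V : Type*} {G : SimpleGraph V}

theorem dist_le_dist_add_one_of_adj {u v w : V} (hadj : G.Adj v w) :
    G.dist u v ≤ G.dist u w + 1 := by
  rcases hadj.symm.diff_dist_adj (u := u) with h | h | h <;> omega

theorem exists_adj_dist_add_one_eq {u v : V} (h : G.dist u v ≠ 0) :
    ∃ w, G.Adj v w ∧ G.dist u w + 1 = G.dist u v := by
  obtain ⟨p, hp⟩ := exists_walk_of_dist_ne_zero (dist_comm (G := G) ▸ h)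
  cases p with
  | nil => simp at h
  | cons hadj q =>
    refine ⟨_, hadj, le_antisymm ?_ (dist_le_dist_add_one_of_adj hadj)⟩
    have hq := dist_le q
    rw [Walk.length_cons, dist_comm] at hp
    rw [dist_comm]
    omega

variable [G.LocallyFinite] {z : V}

theorem min_dist_succ_le_one_add_inf' {t : ℕ} {f : V → ℕ} (i : V)
    (hi : (G.neighborFinset i).Nonempty) (hf : ∀ j, min (G.dist z j) t ≤ f j) :
    min (G.dist z i) (t + 1) ≤ 1 + (G.neighborFinset i).inf' hi f := by
  obtain ⟨j, hj, hfj⟩ := Finset.exists_mem_eq_inf' hi f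
  have hdist := dist_le_dist_add_one_of_adj (u := z) ((mem_neighborFinset G i j).mp hj)
  have := hf j
  omega

theorem one_add_inf'_eq_dist {t : ℕ} {f : V → ℕ} {i : V} (hreach : G.Reachable z i)
    (hiz : i ≠ z) (hit : G.dist z i ≤ t) (hi : (G.neighborFinset i).Nonempty)
    (hf : ∀ j, min (G.dist z j) t ≤ f j) (hf_eq : ∀ j, G.dist z j < t → f j = G.dist z j) :
    1 + (G.neighborFinset i).inf' hi f = G.dist z i := by
  obtain ⟨j, hadj, hj⟩ :=
    exists_adj_dist_add_one_eq (hreach.dist_eq_zero_iff.not.mpr (Ne.symm hiz))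
  have hupper : (G.neighborFinset i).inf' hi f ≤ f j :=
    Finset.inf'_le f ((mem_neighborFinset G i j).mpr hadj)
  have hlower := min_dist_succ_le_one_add_inf' i hi hf
  rw [hf_eq j (by omega)] at hupper
  omega

variable {dh : ℕ → V → ℕ} (hne : ∀ i, (G.neighborFinset i).Nonempty)

theorem min_dist_le_of_relax
    (hupd : ∀ t, 1 ≤ t → ∀ i, i ≠ z →
      dh t i = 1 + (G.neighborFinset i).inf' (hne i) (fun j => dh (t - 1) j)) :
    ∀ t i, min (G.dist z i) t ≤ dh t i := by
  intro t
  induction t with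
  | zero => simp
  | succ t ih =>
    intro i
    by_cases hiz : i = z
    · simp [hiz]
    · rw [hupd (t + 1) t.succ_pos i hiz, Nat.add_sub_cancel]
      exact min_dist_succ_le_one_add_inf' i (hne i) ih

theorem eq_dist_of_dist_lt_of_relax (hconn : G.Connected) (hsrc : ∀ t, 1 ≤ t → dh t z = 0)
    (hupd : ∀ t, 1 ≤ t → ∀ i, i ≠ z →
      dh t i = 1 + (G.neighborFinset i).inf' (hne i) (fun j => dh (t - 1) j)) :
    ∀ t i, G.dist z i < t → dh t i = G.dist z i := by
  intro t
  induction t with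
  | zero => simp
  | succ t ih =>
    intro i hi
    by_cases hiz : i = z
    · rw [hiz, hsrc (t + 1) t.succ_pos, dist_self]
    · rw [hupd (t + 1) t.succ_pos i hiz, Nat.add_sub_cancel]
      exact one_add_inf'_eq_dist (hconn z i) hiz (by omega) (hne i)
        (min_dist_le_of_relax hne hupd t) ih

end SimpleGraph

theorem abf_switch_converged_region_general {V : Type*} [Fintype V]
    (G : SimpleGraph V) [DecidableRel G.Adj] (hconn : G.Connected) (z : V)
    (hne : ∀ i : V, (G.neighborFinset i).Nonempty)
    (dh : ℕ → V → ℕ)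
    (hsrc : ∀ t, 1 ≤ t → dh t z = 0)
    (hupd : ∀ t, 1 ≤ t → ∀ i, i ≠ z →
      dh t i = 1 + (G.neighborFinset i).inf' (hne i) (fun j => dh (t - 1) j)) :
    ∀ t, 1 ≤ t → ∀ i, G.dist z i < t → dh t i = G.dist z i :=
  fun t _ => SimpleGraph.eq_dist_of_dist_lt_of_relax hne hconn hsrc hupd t

/-- Source switch from old source `o` (= node `D-1`) to new source `z` (= node `0`)
with `d(z,o) ≥ 3`, starting from the steady state for source `o`: under the ABF
update with source `z` for `t ≥ 1`, every node `i` with `d(z,i) < t` satisfies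
`d̂_i(t) = d(z,i)`. -/
theorem abf_switch_converged_region {V : Type*} [Fintype V] [DecidableEq V]
    (G : SimpleGraph V) [DecidableRel G.Adj] (hconn : G.Connected) (z o : V)
    (hzo : 3 ≤ G.dist z o)
    (hne : ∀ i : V, (G.neighborFinset i).Nonempty)
    (dh : ℕ → V → ℕ)
    (hinit : ∀ i, dh 0 i = G.dist o i)
    (hsrc : ∀ t, 1 ≤ t → dh t z = 0)
    (hupd : ∀ t, 1 ≤ t → ∀ i, i ≠ z →
      dh t i = 1 + (G.neighborFinset i).inf' (hne i) (fun j => dh (t - 1) j)) :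
    ∀ t, 1 ≤ t → ∀ i, G.dist z i < t → dh t i = G.dist z i :=
  abf_switch_converged_region_general G hconn z hne dh hsrc hupd
end

section
/- Under monotonic filtering after the source switch, every node i in I_1(t) = {i : d(D-1,i) < t, d(0,i) ≥ t} has empty child set C_i(t), and hence accumulate a_i(t) = 1. -/
/-!
Until the wave from the new source `z` reaches `i`, the min-plus update raises a common lower
bound by one per round, so `t ≤ d̂_i(t)` whenever `t ≤ d(z,i)`. Conversely, following a shortest
path to the old source `o`, `d̂_i(s) ≤ s + 1` as soon as `d(o,i) ≤ s + 1`. A child `j` of `i` at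
time `t` satisfies both its parent rule `d̂_j(t-1) = 1 + d̂_i(t-2)` and the filter
`d̂_j(t-1) = d̂_i(t) + 1`, so `t ≤ d̂_i(t) = d̂_i(t-2) < t`.
-/

namespace SimpleGraph

variable {V : Type*} {G : SimpleGraph V}

theorem exists_adj_dist_lt {u v : V} (h : G.dist u v ≠ 0) :
    ∃ w, G.Adj v w ∧ G.dist u w < G.dist u v := by
  rw [dist_comm] at h
  obtain ⟨p, hp⟩ := exists_walk_of_dist_ne_zero h
  cases p with
  | nil => exact absurd hp.symm h
  | cons hadj q =>
    refine ⟨_, hadj, ?_⟩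
    rw [dist_comm, dist_comm (u := u), ← hp, Walk.length_cons]
    exact Nat.lt_succ_of_le (dist_le q)

end SimpleGraph

open SimpleGraph

section DistanceEstimates

variable {V : Type*} [Fintype V] {G : SimpleGraph V} [DecidableRel G.Adj]
  {hne : ∀ i : V, (G.neighborFinset i).Nonempty} {dh : ℕ → V → ℕ}

theorem le_estimate_of_le_dist {z : V}
    (hupd : ∀ t, 1 ≤ t → ∀ i, i ≠ z →
      dh t i = 1 + (G.neighborFinset i).inf' (hne i) (fun j => dh (t - 1) j))
    (s : ℕ) (i : V) (hs : s ≤ G.dist z i) : s ≤ dh s i := by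
  induction s generalizing i with
  | zero => exact Nat.zero_le _
  | succ s ih =>
    have hiz : i ≠ z := by
      rintro rfl
      simp at hs
    rw [hupd (s + 1) (by omega) i hiz, Nat.add_sub_cancel]
    suffices s ≤ (G.neighborFinset i).inf' (hne i) (fun j => dh s j) by omega
    refine Finset.le_inf' _ _ fun j hj => ih j ?_
    have hadj : G.Adj j i := ((mem_neighborFinset G i j).1 hj).symm
    have htri := hadj.reachable.dist_triangle_right z
    rw [dist_eq_one_iff_adj.2 hadj] at htri
    omega

theorem estimate_le_succ_of_dist_le (hconn : G.Connected) {o z : V}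
    (hinit : ∀ i, dh 0 i = G.dist o i)
    (hsrc : ∀ t, 1 ≤ t → dh t z = 0)
    (hupd : ∀ t, 1 ≤ t → ∀ i, i ≠ z →
      dh t i = 1 + (G.neighborFinset i).inf' (hne i) (fun j => dh (t - 1) j))
    (s : ℕ) (i : V) (hs : G.dist o i ≤ s + 1) : dh s i ≤ s + 1 := by
  induction s generalizing i with
  | zero => rw [hinit]; exact hs
  | succ s ih =>
    by_cases hiz : i = z
    · rw [hiz, hsrc (s + 1) (by omega)]
      omega
    obtain ⟨j, hadj, hj⟩ : ∃ j, G.Adj i j ∧ G.dist o j ≤ s + 1 := by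
      by_cases hio : i = o
      · obtain ⟨j, hj⟩ := hne i
        have hadj := (mem_neighborFinset G i j).1 hj
        refine ⟨j, hadj, ?_⟩
        rw [dist_eq_one_iff_adj.2 (hio ▸ hadj)]
        omega
      · obtain ⟨j, hadj, hlt⟩ := exists_adj_dist_lt (hconn.pos_dist_of_ne (Ne.symm hio)).ne'
        exact ⟨j, hadj, by omega⟩
    rw [hupd (s + 1) (by omega) i hiz, Nat.add_sub_cancel]
    have hmin := Finset.inf'_le (fun j => dh s j) ((mem_neighborFinset G i j).2 hadj)
    have := ih j hj
    omega

end DistanceEstimates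

theorem estimate_eq_one_add_estimate_parent {V : Type*} {dh : ℕ → V → ℕ} {c : ℕ → V → V}
    {o z : V} (h0 : dh 0 o = 0) (hsrc : ∀ t, 1 ≤ t → dh t z = 0)
    (hc0 : ∀ i, i ≠ o → dh 0 i = 1 + dh 0 (c 0 i))
    (hc : ∀ t, 1 ≤ t → ∀ i, i ≠ z → dh t i = 1 + dh (t - 1) (c t i))
    (s : ℕ) (j : V) (hj : dh s j ≠ 0) : dh s j = 1 + dh (s - 1) (c s j) := by
  cases s with
  | zero => exact hc0 j (by rintro rfl; exact hj h0)
  | succ s => exact hc (s + 1) (by omega) j (by rintro rfl; exact hj (hsrc (s + 1) (by omega)))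

theorem monotonic_filtering_I1_general {V : Type*} [Fintype V] [DecidableEq V]
    (G : SimpleGraph V) [DecidableRel G.Adj] (hconn : G.Connected) (z o : V)
    (hne : ∀ i : V, (G.neighborFinset i).Nonempty)
    (dh : ℕ → V → ℕ) (c : ℕ → V → V) (a : ℕ → V → ℕ)
    (hinit : ∀ i, dh 0 i = G.dist o i)
    (hsrc : ∀ t, 1 ≤ t → dh t z = 0)
    (hupd : ∀ t, 1 ≤ t → ∀ i, i ≠ z →
      dh t i = 1 + (G.neighborFinset i).inf' (hne i) (fun j => dh (t - 1) j))
    (hc0 : ∀ i, i ≠ o → G.Adj i (c 0 i) ∧ dh 0 i = 1 + dh 0 (c 0 i))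
    (hc : ∀ t, 1 ≤ t → ∀ i, i ≠ z →
      G.Adj i (c t i) ∧ dh t i = 1 + dh (t - 1) (c t i))
    (ha : ∀ t, 1 ≤ t → ∀ i, a t i = 1 +
      ∑ j ∈ Finset.univ.filter
          (fun j => c (t - 1) j = i ∧ dh (t - 1) j = dh t i + 1), a (t - 1) j) :
    ∀ t, 1 ≤ t → ∀ i, G.dist o i < t → t ≤ G.dist z i →
      Finset.univ.filter
          (fun j => c (t - 1) j = i ∧ dh (t - 1) j = dh t i + 1) = ∅ ∧
      a t i = 1 := by
  intro t ht i hoi hzi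
  have hlower : t ≤ dh t i := le_estimate_of_le_dist hupd t i hzi
  have hupper : dh (t - 2) i < t := by
    rcases Nat.lt_or_ge t 2 with ht2 | ht2
    · rw [show t - 2 = 0 by omega, hinit]
      exact hoi
    · have := estimate_le_succ_of_dist_le hconn hinit hsrc hupd (t - 2) i (by omega)
      omega
  have hempty : Finset.univ.filter
      (fun j => c (t - 1) j = i ∧ dh (t - 1) j = dh t i + 1) = ∅ := by
    refine Finset.filter_eq_empty_iff.2 fun j _ ⟨hcj, hdj⟩ => ?_
    have hparent := estimate_eq_one_add_estimate_parent (by rw [hinit, dist_self]) hsrc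
      (fun i hi => (hc0 i hi).2) (fun t ht i hi => (hc t ht i hi).2) (t - 1) j (by omega)
    rw [hcj, show t - 1 - 1 = t - 2 by omega] at hparent
    omega
  exact ⟨hempty, by rw [ha t ht i, hempty, Finset.sum_empty, add_zero]⟩

/-- Monotonic filtering after a source switch from `o` to `z` (`d(z,o) ≥ 3`):
every node `i ∈ I_1(t) = {i : d(o,i) < t, d(z,i) ≥ t}` has empty child set
`C_i(t) = {j : c_j(t-1) = i ∧ d̂_j(t-1) = d̂_i(t) + 1}`, hence `a_i(t) = 1`. -/
theorem monotonic_filtering_I1 {V : Type*} [Fintype V] [DecidableEq V]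
    (G : SimpleGraph V) [DecidableRel G.Adj] (hconn : G.Connected) (z o : V)
    (hzo : 3 ≤ G.dist z o)
    (hne : ∀ i : V, (G.neighborFinset i).Nonempty)
    (dh : ℕ → V → ℕ) (c : ℕ → V → V) (a : ℕ → V → ℕ)
    (hinit : ∀ i, dh 0 i = G.dist o i)
    (hsrc : ∀ t, 1 ≤ t → dh t z = 0)
    (hupd : ∀ t, 1 ≤ t → ∀ i, i ≠ z →
      dh t i = 1 + (G.neighborFinset i).inf' (hne i) (fun j => dh (t - 1) j))
    (hc0s : c 0 o = o)
    (hc0 : ∀ i, i ≠ o → G.Adj i (c 0 i) ∧ dh 0 i = 1 + dh 0 (c 0 i))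
    (hcs : ∀ t, 1 ≤ t → c t z = z)
    (hc : ∀ t, 1 ≤ t → ∀ i, i ≠ z →
      G.Adj i (c t i) ∧ dh t i = 1 + dh (t - 1) (c t i))
    (ha : ∀ t, 1 ≤ t → ∀ i, a t i = 1 +
      ∑ j ∈ Finset.univ.filter
          (fun j => c (t - 1) j = i ∧ dh (t - 1) j = dh t i + 1), a (t - 1) j) :
    ∀ t, 1 ≤ t → ∀ i, G.dist o i < t → t ≤ G.dist z i →
      Finset.univ.filter
          (fun j => c (t - 1) j = i ∧ dh (t - 1) j = dh t i + 1) = ∅ ∧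
      a t i = 1 :=
  monotonic_filtering_I1_general G hconn z o hne dh c a hinit hsrc hupd hc0 hc ha
end

section
/- Under monotonic filtering after the source switch, the total stale accumulate flowing from the untouched region into the converged region in one step is at most N: the sum over i ∈ I_0(t) and j ∈ C_i(t) ∩ I_2(t) of a_j(t-1) is at most N, where N = |V|. -/
/-!
After the switch of source from `o` to `z`, the distance-vector estimates at time `t` are exact
(`d(z,i)`) on the ball `d(z,i) < t` and still equal the old distances `d(o,i)` wherever
`t ≤ d(z,i)` and `t ≤ d(o,i)`. So a stale vertex `j` that filters into a converged parent `i`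
has `d(o,j) = d̂_{t-1}(j) = d̂_t(i) + 1 = d(z,i) + 1 = t`. The stale accumulates of the old
level `t` only collect children one old level further out, again stale, so these accumulates
count disjoint sets of vertices at old levels `≥ t`; hence their sum is at most `|V|`.
-/

open Finset

namespace SimpleGraph

variable {V : Type*} {G : SimpleGraph V} {u x y : V}

theorem Adj.dist_le_dist_add_one (h : G.Adj x y) (u : V) : G.dist u x ≤ G.dist u y + 1 := by
  rcases h.symm.diff_dist_adj (u := u) with h | h | h <;> omega

theorem Reachable.exists_adj_dist_add_one_eq (hr : G.Reachable u x) (hpos : 0 < G.dist u x) :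
    ∃ y, G.Adj x y ∧ G.dist u y + 1 = G.dist u x := by
  obtain ⟨p, hp⟩ := hr.symm.exists_walk_length_eq_dist
  rw [dist_comm] at hp
  have hnil : ¬p.Nil := by rw [Walk.not_nil_iff_lt_length]; omega
  refine ⟨p.snd, p.adj_snd hnil, ?_⟩
  have htail : G.dist u p.snd ≤ p.tail.length := dist_comm (G := G) ▸ G.dist_le p.tail
  have := p.length_tail_add_one hnil
  have := (p.adj_snd hnil).dist_le_dist_add_one u
  omega

end SimpleGraph

theorem sum_accumulate_le_card_level_ge {V : Type*} [Fintype V] (ℓ : V → ℕ)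
    (a : ℕ → V → ℕ) (ch : ℕ → V → Finset V) (P : ℕ → V → Prop)
    (hdisj : ∀ s, Pairwise (Function.onFun Disjoint (ch s)))
    (ha : ∀ s j, a s j = 1 + ∑ k ∈ ch s j, a (s - 1) k)
    (hch : ∀ s j, P s j → ∀ k ∈ ch s j, ℓ k = ℓ j + 1 ∧ P (s - 1) k)
    (m s : ℕ) (F : Finset V) (hF : ∀ j ∈ F, ℓ j = m ∧ P s j) :
    ∑ j ∈ F, a s j ≤ #{x | m ≤ ℓ x} := by
  classical
  induction hn : univ.sup ℓ + 1 - m generalizing m s F with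
  | zero =>
    have : F = ∅ := eq_empty_of_forall_notMem fun j hj => by
      have := le_sup (f := ℓ) (mem_univ j)
      have := (hF j hj).1
      omega
    simp [this]
  | succ n ih =>
    have hF' : ∀ k ∈ F.biUnion (ch s), ℓ k = m + 1 ∧ P (s - 1) k := by
      simp only [mem_biUnion]
      rintro k ⟨j, hj, hk⟩
      obtain ⟨rfl, hP⟩ := hF j hj
      exact hch s j hP k hk
    have hlevels : #F + #{x | m + 1 ≤ ℓ x} ≤ #{x | m ≤ ℓ x} := by
      rw [← card_union_of_disjoint]
      · refine card_le_card fun x hx => ?_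
        rcases mem_union.1 hx with hx | hx
        · simp [(hF x hx).1]
        · simp only [mem_filter, mem_univ, true_and] at hx ⊢
          omega
      · exact disjoint_left.2 fun x hx hx' => by simp [(hF x hx).1] at hx'
    calc ∑ j ∈ F, a s j = #F + ∑ k ∈ F.biUnion (ch s), a (s - 1) k := by
          rw [sum_biUnion ((hdisj s).set_pairwise _), sum_congr rfl fun j _ => ha s j,
            sum_add_distrib, card_eq_sum_ones]
      _ ≤ #F + #{x | m + 1 ≤ ℓ x} :=
          Nat.add_le_add_left (ih (m + 1) (s - 1) _ hF' (by omega)) _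
      _ ≤ #{x | m ≤ ℓ x} := hlevels

section

variable {V : Type*} {G : SimpleGraph V} {z o : V}

def IsDistanceVectorStep (G : SimpleGraph V) (z : V) (d d' : V → ℕ) : Prop :=
  d' z = 0 ∧
    ∀ x, x ≠ z → (∃ y, G.Adj x y ∧ d' x = d y + 1) ∧ ∀ y, G.Adj x y → d' x ≤ d y + 1

theorem isDistanceVectorStep_of_eq_inf' [G.LocallyFinite]
    (hne : ∀ x, (G.neighborFinset x).Nonempty) {d d' : V → ℕ} (hz : d' z = 0)
    (h : ∀ x, x ≠ z → d' x = 1 + (G.neighborFinset x).inf' (hne x) d) :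
    IsDistanceVectorStep G z d d' := by
  refine ⟨hz, fun x hx => ⟨?_, fun y hy => ?_⟩⟩
  · obtain ⟨y, hy, hmin⟩ := exists_mem_eq_inf' (hne x) d
    exact ⟨y, (G.mem_neighborFinset x y).1 hy, by rw [h x hx, hmin, add_comm]⟩
  · rw [h x hx, add_comm]
    exact Nat.add_le_add_right (inf'_le d ((G.mem_neighborFinset x y).2 hy)) 1

namespace DistanceVector

variable {d : ℕ → V → ℕ}

theorem dist_le_or_le (hstep : ∀ s, IsDistanceVectorStep G z (d s) (d (s + 1)))
    (s : ℕ) (x : V) :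
    G.dist z x ≤ d s x ∨ s ≤ d s x := by
  induction s generalizing x with
  | zero => exact .inr (Nat.zero_le _)
  | succ s ih =>
    by_cases hx : x = z
    · simp [hx, (hstep s).1]
    obtain ⟨y, hxy, hdx⟩ := ((hstep s).2 x hx).1
    have := hxy.dist_le_dist_add_one z
    rcases ih y with h | h <;> omega

/-- Either the estimate still dominates the old distance, or it was relayed from `z` within
`s` rounds. -/
theorem dist_init_le_or (hstep : ∀ s, IsDistanceVectorStep G z (d s) (d (s + 1)))
    (hinit : ∀ x, d 0 x = G.dist o x) (s : ℕ) (x : V) :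
    G.dist o x ≤ d s x ∨ (G.dist z x ≤ d s x ∧ d s x < s) := by
  induction s generalizing x with
  | zero => exact .inl (hinit x).ge
  | succ s ih =>
    by_cases hx : x = z
    · simp [hx, (hstep s).1]
    obtain ⟨y, hxy, hdx⟩ := ((hstep s).2 x hx).1
    have := hxy.dist_le_dist_add_one o
    have := hxy.dist_le_dist_add_one z
    rcases ih y with h | h <;> omega

theorem le_dist_of_dist_lt (hconn : G.Connected)
    (hstep : ∀ s, IsDistanceVectorStep G z (d s) (d (s + 1))) {s : ℕ} {x : V}
    (hx : G.dist z x < s) : d s x ≤ G.dist z x := by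
  induction s generalizing x with
  | zero => omega
  | succ s ih =>
    by_cases hxz : x = z
    · simp [hxz, (hstep s).1]
    obtain ⟨y, hxy, hy⟩ :=
      (hconn z x).exists_adj_dist_add_one_eq (hconn.pos_dist_of_ne (Ne.symm hxz))
    have := ((hstep s).2 x hxz).2 y hxy
    have := ih (x := y) (by omega)
    omega

theorem eq_dist_of_dist_lt (hconn : G.Connected)
    (hstep : ∀ s, IsDistanceVectorStep G z (d s) (d (s + 1))) {s : ℕ} {x : V}
    (hx : G.dist z x < s) : d s x = G.dist z x := by
  have := le_dist_of_dist_lt hconn hstep hx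
  rcases dist_le_or_le hstep s x with h | h <;> omega

theorem le_dist_init (hconn : G.Connected)
    (hstep : ∀ s, IsDistanceVectorStep G z (d s) (d (s + 1)))
    (hinit : ∀ x, d 0 x = G.dist o x) {s : ℕ} {x : V}
    (hz : s ≤ G.dist z x) (ho : s ≤ G.dist o x) : d s x ≤ G.dist o x := by
  induction s generalizing x with
  | zero => exact (hinit x).le
  | succ s ih =>
    have hxz : x ≠ z := by rintro rfl; simp at hz
    obtain ⟨y, hxy, hy⟩ := (hconn o x).exists_adj_dist_add_one_eq (by omega)
    have := ((hstep s).2 x hxz).2 y hxy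
    have := hxy.dist_le_dist_add_one z
    have := ih (x := y) (by omega) (by omega)
    omega

theorem eq_dist_init (hconn : G.Connected)
    (hstep : ∀ s, IsDistanceVectorStep G z (d s) (d (s + 1)))
    (hinit : ∀ x, d 0 x = G.dist o x) {s : ℕ} {x : V}
    (hz : s ≤ G.dist z x) (ho : s ≤ G.dist o x) : d s x = G.dist o x := by
  have := le_dist_init hconn hstep hinit hz ho
  rcases dist_init_le_or hstep hinit s x with h | h <;> omega

theorem dist_init_eq_of_adj_converged (hconn : G.Connected)
    (hstep : ∀ s, IsDistanceVectorStep G z (d s) (d (s + 1)))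
    (hinit : ∀ x, d 0 x = G.dist o x) {t : ℕ} {i j : V} (hadj : G.Adj j i)
    (hi : G.dist z i < t) (hdj : d (t - 1) j = d t i + 1)
    (hjz : t ≤ G.dist z j) (hjo : t ≤ G.dist o j) : G.dist o j = t := by
  rw [eq_dist_of_dist_lt hconn hstep hi,
    eq_dist_init hconn hstep hinit (by omega) (by omega)] at hdj
  have := hadj.dist_le_dist_add_one z
  omega

theorem dist_init_eq_succ_of_parent (hconn : G.Connected)
    (hstep : ∀ s, IsDistanceVectorStep G z (d s) (d (s + 1)))
    (hinit : ∀ x, d 0 x = G.dist o x) {c : ℕ → V → V}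
    (hpar : ∀ s k, k ≠ z → G.Adj k (c (s + 1) k)) {s : ℕ} {j k : V}
    (hjz : s ≤ G.dist z j) (hjo : s < G.dist o j) (hck : c (s - 1) k = j)
    (hdk : d (s - 1) k = d s j + 1) :
    G.dist o k = G.dist o j + 1 ∧ s - 1 ≤ G.dist z k ∧ s - 1 < G.dist o k := by
  rw [eq_dist_init hconn hstep hinit hjz hjo.le] at hdk
  obtain hs | ⟨r, rfl⟩ : s - 1 = 0 ∨ ∃ r, s = r + 2 := by
    rcases Nat.lt_or_ge s 2 with h | h
    · exact .inl (by omega)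
    · exact .inr ⟨s - 2, by omega⟩
  · rw [hs, hinit] at hdk
    omega
  · have hkz : k ≠ z := by
      rintro rfl
      rw [show r + 2 - 1 = r + 1 from rfl, (hstep r).1] at hdk
      omega
    have hadj : G.Adj k j := hck ▸ hpar r k hkz
    have := hadj.symm.dist_le_dist_add_one z
    have := hadj.symm.dist_le_dist_add_one o
    rw [eq_dist_init hconn hstep hinit (by omega) (by omega)] at hdk
    omega

end DistanceVector

end

theorem monotonic_filtering_stale_flow_general {V : Type*} [Fintype V] [DecidableEq V]
    (G : SimpleGraph V) [DecidableRel G.Adj] (hconn : G.Connected) (z o : V)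
    (hne : ∀ i : V, (G.neighborFinset i).Nonempty)
    (dh : ℕ → V → ℕ) (c : ℕ → V → V) (a : ℕ → V → ℕ)
    (hinit : ∀ i, dh 0 i = G.dist o i)
    (hsrc : ∀ t, 1 ≤ t → dh t z = 0)
    (hupd : ∀ t, 1 ≤ t → ∀ i, i ≠ z →
      dh t i = 1 + (G.neighborFinset i).inf' (hne i) (fun j => dh (t - 1) j))
    (hc0 : ∀ i, i ≠ o → G.Adj i (c 0 i) ∧ dh 0 i = 1 + dh 0 (c 0 i))
    (hc : ∀ t, 1 ≤ t → ∀ i, i ≠ z →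
      G.Adj i (c t i) ∧ dh t i = 1 + dh (t - 1) (c t i))
    (ha : ∀ t i, a t i = 1 +
      ∑ j ∈ Finset.univ.filter
          (fun j => c (t - 1) j = i ∧ dh (t - 1) j = dh t i + 1), a (t - 1) j) :
    ∀ t, 1 ≤ t →
      ∑ i ∈ Finset.univ.filter (fun i => G.dist z i < t),
        ∑ j ∈ Finset.univ.filter
            (fun j => (c (t - 1) j = i ∧ dh (t - 1) j = dh t i + 1) ∧
              t ≤ G.dist z j ∧ t ≤ G.dist o j), a (t - 1) j
      ≤ Fintype.card V := by
  have hstep : ∀ s, IsDistanceVectorStep G z (dh s) (dh (s + 1)) := fun s =>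
    isDistanceVectorStep_of_eq_inf' hne (hsrc _ s.succ_pos) (hupd _ s.succ_pos)
  have hpar : ∀ s k, k ≠ z → G.Adj k (c (s + 1) k) := fun s k hk => (hc _ s.succ_pos k hk).1
  intro t ht
  have hparent : ∀ j, t ≤ G.dist z j → t ≤ G.dist o j → G.Adj j (c (t - 1) j) := by
    intro j hjz hjo
    obtain _ | _ | s := t
    · omega
    · exact (hc0 j (by rintro rfl; simp at hjo)).1
    · exact hpar s j (by rintro rfl; simp at hjz)
  let ch : ℕ → V → Finset V := fun s i =>
    univ.filter fun j => c (s - 1) j = i ∧ dh (s - 1) j = dh s i + 1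
  have hdisj : ∀ s, Pairwise (Function.onFun Disjoint (ch s)) := fun s i i' hii' =>
    disjoint_left.2 fun j hj hj' => hii' ((mem_filter.1 hj).2.1.symm.trans (mem_filter.1 hj').2.1)
  calc _ = ∑ j ∈ (univ.filter fun i => G.dist z i < t).biUnion fun i => univ.filter fun j =>
          (c (t - 1) j = i ∧ dh (t - 1) j = dh t i + 1) ∧ t ≤ G.dist z j ∧ t ≤ G.dist o j,
        a (t - 1) j := by
        refine (sum_biUnion fun i _ i' _ hii' => disjoint_left.2 fun j hj hj' => hii' ?_).symm
        exact (mem_filter.1 hj).2.1.1.symm.trans (mem_filter.1 hj').2.1.1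
    _ ≤ #{x | t ≤ G.dist o x} := by
        refine sum_accumulate_le_card_level_ge (G.dist o) a ch
          (fun s j => s ≤ G.dist z j ∧ s < G.dist o j) hdisj ha
          (fun s j hj k hk => ?_) t (t - 1) _ fun j hj => ?_
        · obtain ⟨-, hck, hdk⟩ := mem_filter.1 hk
          exact DistanceVector.dist_init_eq_succ_of_parent hconn hstep hinit hpar hj.1 hj.2 hck hdk
        · obtain ⟨i, hi, hj⟩ := mem_biUnion.1 hj
          obtain ⟨-, ⟨hci, hdj⟩, hjz, hjo⟩ := mem_filter.1 hj
          have := DistanceVector.dist_init_eq_of_adj_converged hconn hstep hinit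
            (hci ▸ hparent j hjz hjo) (mem_filter.1 hi).2 hdj hjz hjo
          omega
    _ ≤ Fintype.card V := card_filter_le _ _

/-- Monotonic filtering after a source switch from `o` to `z` (`d(z,o) ≥ 3`),
initialized at the steady state for source `o` (so that each level sum of the
initial accumulates is at most `N`): the total stale accumulate flowing from the
untouched region `I_2(t)` into the converged region `I_0(t)` in one step is at
most `N = |V|`. -/
theorem monotonic_filtering_stale_flow {V : Type*} [Fintype V] [DecidableEq V]
    (G : SimpleGraph V) [DecidableRel G.Adj] (hconn : G.Connected) (z o : V)
    (hzo : 3 ≤ G.dist z o)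
    (hne : ∀ i : V, (G.neighborFinset i).Nonempty)
    (dh : ℕ → V → ℕ) (c : ℕ → V → V) (a : ℕ → V → ℕ)
    (hinit : ∀ i, dh 0 i = G.dist o i)
    (hsrc : ∀ t, 1 ≤ t → dh t z = 0)
    (hupd : ∀ t, 1 ≤ t → ∀ i, i ≠ z →
      dh t i = 1 + (G.neighborFinset i).inf' (hne i) (fun j => dh (t - 1) j))
    (hc0s : c 0 o = o)
    (hc0 : ∀ i, i ≠ o → G.Adj i (c 0 i) ∧ dh 0 i = 1 + dh 0 (c 0 i))
    (hcs : ∀ t, 1 ≤ t → c t z = z)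
    (hc : ∀ t, 1 ≤ t → ∀ i, i ≠ z →
      G.Adj i (c t i) ∧ dh t i = 1 + dh (t - 1) (c t i))
    (ha : ∀ t i, a t i = 1 +
      ∑ j ∈ Finset.univ.filter
          (fun j => c (t - 1) j = i ∧ dh (t - 1) j = dh t i + 1), a (t - 1) j)
    (hlevel : ∀ m : ℕ,
      ∑ j ∈ Finset.univ.filter (fun j => G.dist o j = m), a 0 j ≤ Fintype.card V) :
    ∀ t, 1 ≤ t →
      ∑ i ∈ Finset.univ.filter (fun i => G.dist z i < t),
        ∑ j ∈ Finset.univ.filter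
            (fun j => (c (t - 1) j = i ∧ dh (t - 1) j = dh t i + 1) ∧
              t ≤ G.dist z j ∧ t ≤ G.dist o j), a (t - 1) j
      ≤ Fintype.card V :=
  monotonic_filtering_stale_flow_general G hconn z o hne dh c a hinit hsrc hupd hc0 hc ha
end

section
/- If i ∈ I_0(t) has a neighbor j ∈ I_2(t), then d(0,i) = t-1, and consequently d̂_i(t) = t-1; any such j admitted as a child of i under monotonic filtering satisfies d̂_j(t) = t. -/
/-!
After the switch, `d̂_k(t)` never drops below `min (d(z,k), d(o,k))`, and it is at most
`d(z,k)` as soon as `d(z,k) < t`, since the value `0` at `z` propagates along a shortest path.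
For the boundary node `i` both bounds equal `t - 1`, because its neighbour `j` is at distance
at least `t` from both `z` and `o`. The node `j` itself has not been reached from `z` by time
`t - 1`, so `d̂_j(t-1) = (t - 1) + d(o,m)` for the end `m` of some walk of length `t - 1` from `j`.
The filtering condition `d̂_j(t-1) = t` forces `m` to be a neighbour of `o`, which yields a walk of
length `t` from `j` to `o`, hence `d̂_j(t) ≤ t`; the lower bound gives equality.
-/

open SimpleGraph

section

variable {V : Type*} [Fintype V]

/-- `dh t i` is the estimate `d̂_i(t)` of adaptive Bellman–Ford run from the new source `z`,
started from the distances to the old source `o`. -/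
structure IsSourceSwitchRun (G : SimpleGraph V) [DecidableRel G.Adj]
    (hne : ∀ i : V, (G.neighborFinset i).Nonempty) (z o : V) (dh : ℕ → V → ℕ) : Prop where
  init : ∀ i, dh 0 i = G.dist o i
  source : ∀ t, 1 ≤ t → dh t z = 0
  update : ∀ t, 1 ≤ t → ∀ i, i ≠ z →
    dh t i = 1 + (G.neighborFinset i).inf' (hne i) (fun j => dh (t - 1) j)

namespace IsSourceSwitchRun

variable {G : SimpleGraph V} [DecidableRel G.Adj] {hne : ∀ i : V, (G.neighborFinset i).Nonempty}
  {z o : V} {dh : ℕ → V → ℕ} (h : IsSourceSwitchRun G hne z o dh)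
include h

lemma succ_le_of_adj (s : ℕ) {k m : V} (hk : k ≠ z) (hkm : G.Adj k m) :
    dh (s + 1) k ≤ 1 + dh s m := by
  rw [h.update (s + 1) s.succ_pos k hk, Nat.add_sub_cancel]
  exact Nat.add_le_add_left (Finset.inf'_le _ ((mem_neighborFinset ..).mpr hkm)) 1

lemma exists_adj_succ_eq (s : ℕ) {k : V} (hk : k ≠ z) :
    ∃ m, G.Adj k m ∧ dh (s + 1) k = 1 + dh s m := by
  obtain ⟨m, hm, hinf⟩ := Finset.exists_mem_eq_inf' (hne k) (fun j => dh s j)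
  refine ⟨m, (mem_neighborFinset ..).mp hm, ?_⟩
  rw [h.update (s + 1) s.succ_pos k hk, Nat.add_sub_cancel, hinf]

lemma le_add_dist_of_walk (s : ℕ) {k m : V} (w : G.Walk k m) (hw : w.length = s) :
    dh s k ≤ s + G.dist o m := by
  induction s generalizing k with
  | zero =>
    rw [Walk.eq_of_length_eq_zero hw, h.init]
    omega
  | succ s ih =>
    by_cases hk : k = z
    · rw [hk, h.source (s + 1) s.succ_pos]
      exact Nat.zero_le _
    cases w with
    | nil => simp at hw
    | cons hkn q =>
      rw [Walk.length_cons] at hw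
      have := h.succ_le_of_adj s hk hkn
      have := ih q (by omega)
      omega

lemma le_length_of_walk (s : ℕ) {k : V} (w : G.Walk k z) (hw : w.length < s) :
    dh s k ≤ w.length := by
  induction s generalizing k with
  | zero => omega
  | succ s ih =>
    by_cases hk : k = z
    · subst hk
      rw [h.source (s + 1) s.succ_pos]
      exact Nat.zero_le _
    cases w with
    | nil => exact absurd rfl hk
    | cons hkm q =>
      rw [Walk.length_cons] at hw ⊢
      have := h.succ_le_of_adj s hk hkm
      have := ih q (by omega)
      omega

variable (hconn : G.Connected)
include hconn

lemma min_dist_le (s : ℕ) (k : V) : min (G.dist z k) (G.dist o k) ≤ dh s k := by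
  induction s generalizing k with
  | zero => exact (min_le_right _ _).trans_eq (h.init k).symm
  | succ s ih =>
    by_cases hk : k = z
    · simp [hk]
    obtain ⟨m, hkm, hstep⟩ := h.exists_adj_succ_eq s hk
    have hmk : G.dist m k = 1 := dist_eq_one_iff_adj.mpr hkm.symm
    have hz : G.dist z k ≤ G.dist z m + G.dist m k := hconn.dist_triangle
    have ho : G.dist o k ≤ G.dist o m + G.dist m k := hconn.dist_triangle
    have := ih m
    omega

lemma exists_walk_eq_add_dist (s : ℕ) (k : V) (hks : s ≤ G.dist z k) :
    ∃ m, (∃ w : G.Walk k m, w.length = s) ∧ dh s k = s + G.dist o m := by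
  induction s generalizing k with
  | zero => exact ⟨k, ⟨Walk.nil, rfl⟩, by rw [h.init]; omega⟩
  | succ s ih =>
    have hk : k ≠ z := by
      rintro rfl
      rw [dist_self] at hks
      omega
    obtain ⟨n, hkn, hstep⟩ := h.exists_adj_succ_eq s hk
    have hnk : G.dist n k = 1 := dist_eq_one_iff_adj.mpr hkn.symm
    have hz : G.dist z k ≤ G.dist z n + G.dist n k := hconn.dist_triangle
    obtain ⟨m, ⟨w, hw⟩, hval⟩ := ih n (by omega)
    exact ⟨m, ⟨Walk.cons hkn w, by rw [Walk.length_cons, hw]⟩, by omega⟩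

end IsSourceSwitchRun

end

theorem monotonic_filtering_boundary_general {V : Type*} [Fintype V]
    (G : SimpleGraph V) [DecidableRel G.Adj] (hconn : G.Connected) (z o : V)
    (hne : ∀ i : V, (G.neighborFinset i).Nonempty)
    (dh : ℕ → V → ℕ)
    (hinit : ∀ i, dh 0 i = G.dist o i)
    (hsrc : ∀ t, 1 ≤ t → dh t z = 0)
    (hupd : ∀ t, 1 ≤ t → ∀ i, i ≠ z →
      dh t i = 1 + (G.neighborFinset i).inf' (hne i) (fun j => dh (t - 1) j)) :
    ∀ t, 1 ≤ t → ∀ i j, G.dist z i < t → t ≤ G.dist z j → t ≤ G.dist o j →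
      G.Adj i j →
      G.dist z i = t - 1 ∧ dh t i = t - 1 ∧
      (dh (t - 1) j = dh t i + 1 → dh t j = t) := by
  intro t ht i j hzi hzj hoj hij
  have h : IsSourceSwitchRun G hne z o dh := ⟨hinit, hsrc, hupd⟩
  have hij' : G.dist i j = 1 := dist_eq_one_iff_adj.mpr hij
  have hzj_le : G.dist z j ≤ G.dist z i + G.dist i j := hconn.dist_triangle
  have hoj_le : G.dist o j ≤ G.dist o i + G.dist i j := hconn.dist_triangle
  have hzi_eq : G.dist z i = t - 1 := by omega
  obtain ⟨p, hp⟩ := hconn.exists_walk_length_eq_dist i z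
  rw [dist_comm] at hp
  have hi_upper := h.le_length_of_walk t p (by omega)
  have hi_lower := h.min_dist_le hconn t i
  have hdhi : dh t i = t - 1 := by omega
  refine ⟨hzi_eq, hdhi, fun hchild => ?_⟩
  obtain ⟨m, ⟨w, hw⟩, hval⟩ := h.exists_walk_eq_add_dist hconn (t - 1) j (by omega)
  have hmo : G.Adj m o := dist_eq_one_iff_adj.mp (by rw [dist_comm]; omega)
  have hj_upper := h.le_add_dist_of_walk t (w.concat hmo) (by rw [Walk.length_concat]; omega)
  have hj_lower := h.min_dist_le hconn t j
  rw [dist_self] at hj_upper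
  omega

/-- Post-source-switch setting with `d(z,o) ≥ 3`: if `i ∈ I_0(t)` has a neighbor
`j ∈ I_2(t)`, then `d(z,i) = t-1` and consequently `d̂_i(t) = t-1`; any such `j`
admitted as a child of `i` under monotonic filtering (i.e. with
`d̂_j(t-1) = d̂_i(t) + 1`) satisfies `d̂_j(t) = t`. -/
theorem monotonic_filtering_boundary {V : Type*} [Fintype V] [DecidableEq V]
    (G : SimpleGraph V) [DecidableRel G.Adj] (hconn : G.Connected) (z o : V)
    (hzo : 3 ≤ G.dist z o)
    (hne : ∀ i : V, (G.neighborFinset i).Nonempty)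
    (dh : ℕ → V → ℕ)
    (hinit : ∀ i, dh 0 i = G.dist o i)
    (hsrc : ∀ t, 1 ≤ t → dh t z = 0)
    (hupd : ∀ t, 1 ≤ t → ∀ i, i ≠ z →
      dh t i = 1 + (G.neighborFinset i).inf' (hne i) (fun j => dh (t - 1) j)) :
    ∀ t, 1 ≤ t → ∀ i j, G.dist z i < t → t ≤ G.dist z j → t ≤ G.dist o j →
      G.Adj i j →
      G.dist z i = t - 1 ∧ dh t i = t - 1 ∧
      (dh (t - 1) j = dh t i + 1 → dh t j = t) :=
  monotonic_filtering_boundary_general G hconn z o hne dh hinit hsrc hupd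
end
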